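/- A finite collection of pairwise compatible closed subintervals of [0,1] with endpoints in a fixed set {a_0 < a_1 < ... < a_n} that is maximal with respect to this property (among collections of distinct closed intervals with endpoints in this set) has exactly 2n+1 elements. -/

import Mathlib

/-- Two closed intervals `[p.1, p.2]` and `[q.1, q.2]` (with integer indices standing
for the points `a_{p.1} ≤ a_{p.2}` of a fixed set `a_0 < a_1 < ... < a_n`) are
compatible if one contains the other or they are disjoint. -/
def NatIntervalCompatible (p q : ℕ × ℕ) : Prop :=
  (q.1 ≤ p.1 ∧ p.2 ≤ q.2) ∨ (p.1 ≤ q.1 ∧ q.2 ≤ p.2) ∨ p.2 < q.1 ∨ q.2 < p.1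

/-!
A maximal family on `[m, N]` with `m < N` contains the whole interval `[m, N]` and the point
`[m, m]`. Let `[m, k]` be its longest member starting at `m` other than `[m, N]`. Every member
straddling `k` must then be `[m, N]`, so `[k + 1, N]` is compatible with everything and lies in
the family, and the remaining members split into maximal families on `[m, k]` and `[k + 1, N]`.
By induction the count is `1 + (2 (k - m) + 1) + (2 (N - k - 1) + 1) = 2 (N - m) + 1`.
-/

def IsSubinterval (m N : ℕ) (p : ℕ × ℕ) : Prop :=
  m ≤ p.1 ∧ p.1 ≤ p.2 ∧ p.2 ≤ N

instance (m N : ℕ) : DecidablePred (IsSubinterval m N) :=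
  fun _ => inferInstanceAs (Decidable (_ ∧ _ ∧ _))

structure IsMaximalCompatible (m N : ℕ) (S : Finset (ℕ × ℕ)) : Prop where
  subinterval : ∀ p ∈ S, IsSubinterval m N p
  compatible : ∀ p ∈ S, ∀ q ∈ S, p ≠ q → NatIntervalCompatible p q
  maximal : ∀ q, IsSubinterval m N q →
    (∀ p ∈ S, p ≠ q → NatIntervalCompatible p q) → q ∈ S

def IsSplitPoint (m N : ℕ) (S : Finset (ℕ × ℕ)) (k : ℕ) : Prop :=
  k < N ∧ (m, k) ∈ S ∧ ∀ j, k < j → j < N → (m, j) ∉ S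

theorem exists_isSplitPoint {m N : ℕ} {S : Finset (ℕ × ℕ)} (hm : (m, m) ∈ S)
    (hmN : m < N) :
    ∃ k, m ≤ k ∧ IsSplitPoint m N S k := by
  refine ⟨Nat.findGreatest (fun j => (m, j) ∈ S) (N - 1),
    Nat.le_findGreatest (by omega) hm, ?_, Nat.findGreatest_spec (P := fun j => (m, j) ∈ S)
      (m := m) (by omega) hm, fun j hkj hjN hj => ?_⟩
  · have := Nat.findGreatest_le (P := fun j => (m, j) ∈ S) (N - 1)
    omega
  · have := Nat.le_findGreatest (P := fun j => (m, j) ∈ S) (show j ≤ N - 1 by omega) hj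
    omega

namespace IsMaximalCompatible

variable {m N : ℕ} {S : Finset (ℕ × ℕ)}

theorem le_of_mem (hS : IsMaximalCompatible m N S) {a b : ℕ} (h : (a, b) ∈ S) : a ≤ b :=
  (hS.subinterval _ h).2.1

theorem whole_mem (hS : IsMaximalCompatible m N S) (hmN : m ≤ N) : (m, N) ∈ S :=
  hS.maximal _ ⟨le_rfl, hmN, le_rfl⟩ fun p hp _ => by
    obtain ⟨h₁, h₂, h₃⟩ := hS.subinterval p hp
    exact Or.inl ⟨h₁, h₃⟩

theorem point_mem (hS : IsMaximalCompatible m N S) {i : ℕ} (hmi : m ≤ i) (hiN : i ≤ N) :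
    (i, i) ∈ S :=
  hS.maximal _ ⟨hmi, le_rfl, hiN⟩ fun p _ _ => by
    unfold NatIntervalCompatible
    omega

theorem restrict (hS : IsMaximalCompatible m N S) {a b : ℕ} (hma : m ≤ a) (hbN : b ≤ N)
    (hout : ∀ p ∈ S, ¬IsSubinterval a b p → ∀ q, IsSubinterval a b q →
      NatIntervalCompatible p q) :
    IsMaximalCompatible a b (S.filter (IsSubinterval a b)) where
  subinterval p hp := (Finset.mem_filter.1 hp).2
  compatible p hp q hq := hS.compatible p (Finset.mem_filter.1 hp).1 q (Finset.mem_filter.1 hq).1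
  maximal q hq hcompat := by
    refine Finset.mem_filter.2 ⟨hS.maximal q ?_ fun p hp hpq => ?_, hq⟩
    · obtain ⟨h₁, h₂, h₃⟩ := hq
      exact ⟨hma.trans h₁, h₂, h₃.trans hbN⟩
    · by_cases hp' : IsSubinterval a b p
      · exact hcompat p (Finset.mem_filter.2 ⟨hp, hp'⟩) hpq
      · exact hout p hp hp' q hq

variable {k : ℕ}

theorem right_part_mem (hS : IsMaximalCompatible m N S) (hk : IsSplitPoint m N S k) :
    (k + 1, N) ∈ S := by
  obtain ⟨hkN, hkS, hk_max⟩ := hk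
  have := hS.le_of_mem hkS
  refine hS.maximal _ ⟨by omega, hkN, le_rfl⟩ fun p hp _ => ?_
  obtain ⟨h₁, h₂, h₃⟩ := hS.subinterval p hp
  unfold NatIntervalCompatible
  by_cases hp' : p.1 ≤ k ∧ k < p.2
  · have hpk := hS.compatible p hp _ hkS (by rintro rfl; omega)
    unfold NatIntervalCompatible at hpk
    have hp₁ : p = (m, p.2) := Prod.ext (by omega) rfl
    have hp₂ : ¬p.2 < N := fun hlt => hk_max p.2 (by omega) hlt (hp₁ ▸ hp)
    omega
  · omega

theorem eq_whole_or_subinterval (hS : IsMaximalCompatible m N S) (hk : IsSplitPoint m N S k)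
    {p : ℕ × ℕ} (hp : p ∈ S) :
    p = (m, N) ∨ IsSubinterval m k p ∨ IsSubinterval (k + 1) N p := by
  obtain ⟨h₁, h₂, h₃⟩ := hS.subinterval p hp
  unfold IsSubinterval
  by_cases hp' : p.1 ≤ k ∧ k < p.2
  · have hpk := hS.compatible p hp _ hk.2.1 (by rintro rfl; omega)
    have hpr := hS.compatible p hp _ (hS.right_part_mem hk) (by rintro rfl; omega)
    unfold NatIntervalCompatible at hpk hpr
    exact Or.inl (Prod.ext (by omega) (by omega))
  · omega

theorem restrict_left (hS : IsMaximalCompatible m N S) (hk : IsSplitPoint m N S k) :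
    IsMaximalCompatible m k (S.filter (IsSubinterval m k)) :=
  hS.restrict le_rfl hk.1.le fun p hp hp' q ⟨hq₁, hq₂, hq₃⟩ => by
    have := hk.1
    rcases hS.eq_whole_or_subinterval hk hp with rfl | hp'' | ⟨hp₁, -, -⟩
    · unfold NatIntervalCompatible
      omega
    · exact absurd hp'' hp'
    · unfold NatIntervalCompatible
      omega

theorem restrict_right (hS : IsMaximalCompatible m N S) (hk : IsSplitPoint m N S k) :
    IsMaximalCompatible (k + 1) N (S.filter (IsSubinterval (k + 1) N)) :=
  have hmk := hS.le_of_mem hk.2.1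
  hS.restrict (hmk.trans k.le_succ) le_rfl fun p hp hp' q ⟨hq₁, hq₂, hq₃⟩ => by
    rcases hS.eq_whole_or_subinterval hk hp with rfl | ⟨-, -, hp₃⟩ | hp''
    · unfold NatIntervalCompatible
      omega
    · unfold NatIntervalCompatible
      omega
    · exact absurd hp'' hp'

theorem card_eq_card_filter_add_card_filter (hS : IsMaximalCompatible m N S)
    (hk : IsSplitPoint m N S k) :
    S.card =
      (S.filter (IsSubinterval m k)).card + (S.filter (IsSubinterval (k + 1) N)).card + 1 := by
  set L := S.filter (IsSubinterval m k)
  set R := S.filter (IsSubinterval (k + 1) N)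
  have hmk := hS.le_of_mem hk.2.1
  have hdecomp : S = insert (m, N) (L ∪ R) := by
    ext p
    simp only [L, R, Finset.mem_insert, Finset.mem_union, Finset.mem_filter]
    constructor
    · intro hp
      rcases hS.eq_whole_or_subinterval hk hp with h | h | h <;> simp [h, hp]
    · rintro (rfl | ⟨hp, -⟩ | ⟨hp, -⟩)
      exacts [hS.whole_mem (hmk.trans hk.1.le), hp, hp]
  have hdisj : Disjoint L R :=
    Finset.disjoint_filter.2 fun p _ ⟨_, _, hp₃⟩ ⟨hp₁, _, _⟩ => by omega
  have hwhole : (m, N) ∉ L ∪ R := by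
    have := hk.1
    simp only [L, R, Finset.mem_union, Finset.mem_filter, IsSubinterval]
    omega
  conv_lhs => rw [hdecomp]
  rw [Finset.card_insert_of_notMem hwhole, Finset.card_union_of_disjoint hdisj]

theorem card_eq (hS : IsMaximalCompatible m N S) (hmN : m ≤ N) : S.card = 2 * (N - m) + 1 := by
  induction hd : N - m using Nat.strong_induction_on generalizing m N S with
  | _ d ih =>
  obtain rfl | hlt := hmN.eq_or_lt
  · have hS_eq : S = {(m, m)} := Finset.eq_singleton_iff_unique_mem.2
      ⟨hS.point_mem le_rfl le_rfl, fun p hp => by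
        obtain ⟨h₁, h₂, h₃⟩ := hS.subinterval p hp
        exact Prod.ext (by omega) (by omega)⟩
    simp [hS_eq, ← hd]
  · obtain ⟨k, hmk, hk⟩ := exists_isSplitPoint (hS.point_mem le_rfl hlt.le) hlt
    have hkN := hk.1
    have hleft := ih (k - m) (by omega) (hS.restrict_left hk) hmk rfl
    have hright := ih (N - (k + 1)) (by omega) (hS.restrict_right hk) hkN rfl
    rw [hS.card_eq_card_filter_add_card_filter hk, hleft, hright]
    omega

end IsMaximalCompatible

/-- A finite collection of pairwise compatible closed intervals with endpoints among
`a_0 < ... < a_n` that is maximal with respect to this property has exactly `2n+1`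
elements. -/
theorem card_maximal_compatible_family (n : ℕ) (S : Finset (ℕ × ℕ))
    (hS : ∀ p ∈ S, p.1 ≤ p.2 ∧ p.2 ≤ n)
    (hcompat : ∀ p ∈ S, ∀ q ∈ S, p ≠ q → NatIntervalCompatible p q)
    (hmax : ∀ q : ℕ × ℕ, q.1 ≤ q.2 → q.2 ≤ n →
      (∀ p ∈ S, p ≠ q → NatIntervalCompatible p q) → q ∈ S) :
    S.card = 2 * n + 1 := by
  have hS' : IsMaximalCompatible 0 n S :=
    { subinterval := fun p hp => ⟨Nat.zero_le _, hS p hp⟩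
      compatible := hcompat
      maximal := fun q ⟨_, hq₁, hq₂⟩ => hmax q hq₁ hq₂ }
  simpa using hS'.card_eq (Nat.zero_le n)
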